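/- arXiv:2004.00744 — 5 statements merged into one kernel-verified Lean document; each statement's English description precedes it below -/
import Mathlib

section
/- Let G be a regular pattern graph on a pattern set 𝓡 and let p and p' be two joint pmfs, both satisfying marginal positivity, whose selection odds models both factorize with respect to G. If p and p' induce the same observed-data distribution, i.e. p_r(ℓ, r) = p'_r(ℓ, r) for every ℓ and every r ∈ 𝓡, then p = p'; in particular the propensity score π(ℓ) = p(ℓ, 1_d)/p(ℓ, 𝓡) is identified from the observed-data distribution. -/
open Finset

noncomputable section

/-- Response patterns: binary vectors of length `d`, ordered pointwise (`false < true`). -/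
abbrev Pat (d : ℕ) := Fin d → Bool

/-- The all-true (fully observed) pattern `1_d`. -/
def allOnes (d : ℕ) : Pat d := fun _ => true

variable {d : ℕ}


instance (r s : Pat d) : Decidable (r ≤ s) :=
  decidable_of_iff (∀ j, r j ≤ s j) (by simp [Pi.le_def])

instance (r s : Pat d) : Decidable (r < s) :=
  decidable_of_iff (r ≤ s ∧ ¬ s ≤ r) lt_iff_le_not_ge.symm

/-- Two full-data values have the same observed part under pattern `r`. -/
def agree {X : Fin d → Type*} (r : Pat d) (ℓ ℓ' : ∀ j, X j) : Prop :=
  ∀ j, r j = true → ℓ j = ℓ' j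

instance {X : Fin d → Type*} [∀ j, DecidableEq (X j)] (r : Pat d) (ℓ ℓ' : ∀ j, X j) :
    Decidable (agree r ℓ ℓ') := by
  unfold agree; infer_instance

variable {X : Fin d → Type*} [∀ j, Fintype (X j)] [∀ j, DecidableEq (X j)]

/-- `p(ℓ, A) = Σ_{s ∈ A} p(ℓ, s)`. -/
def jointA (p : (∀ j, X j) → Pat d → ℝ) (ℓ : ∀ j, X j) (A : Finset (Pat d)) : ℝ :=
  ∑ s ∈ A, p ℓ s

/-- `p_r(ℓ, s) = Σ_{ℓ' ~_r ℓ} p(ℓ', s)` : observed-data mass under pattern `r`. -/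
def obsP (p : (∀ j, X j) → Pat d → ℝ) (r : Pat d) (ℓ : ∀ j, X j) (s : Pat d) : ℝ :=
  ∑ ℓ' ∈ univ.filter (fun ℓ' => agree r ℓ ℓ'), p ℓ' s

/-- `p_r(ℓ, A) = Σ_{s ∈ A} p_r(ℓ, s)`. -/
def obsPA (p : (∀ j, X j) → Pat d → ℝ) (r : Pat d) (ℓ : ∀ j, X j) (A : Finset (Pat d)) : ℝ :=
  ∑ s ∈ A, obsP p r ℓ s

/-- `p` is a joint pmf on (full data) × (pattern set `𝓡`): nonnegative with total sum 1. -/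
def IsJointPMF (𝓡 : Finset (Pat d)) (p : (∀ j, X j) → Pat d → ℝ) : Prop :=
  (∀ ℓ, ∀ r ∈ 𝓡, 0 ≤ p ℓ r) ∧ (∑ ℓ : ∀ j, X j, ∑ r ∈ 𝓡, p ℓ r) = 1

/-- Marginal positivity: `p_r(ℓ, r) > 0` for every `ℓ` and every `r ∈ 𝓡`. -/
def MargPos (𝓡 : Finset (Pat d)) (p : (∀ j, X j) → Pat d → ℝ) : Prop :=
  ∀ ℓ, ∀ r ∈ 𝓡, 0 < obsP p r ℓ r

/-- Full positivity: `p(ℓ, r) > 0` for every `ℓ` and every `r ∈ 𝓡`. -/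
def FullPos (𝓡 : Finset (Pat d)) (p : (∀ j, X j) → Pat d → ℝ) : Prop :=
  ∀ ℓ, ∀ r ∈ 𝓡, 0 < p ℓ r

/-- Selection odds `O_r(ℓ) = p_r(ℓ, r) / p_r(ℓ, PA(r))`. -/
def odds (p : (∀ j, X j) → Pat d → ℝ) (PA : Pat d → Finset (Pat d)) (r : Pat d)
    (ℓ : ∀ j, X j) : ℝ :=
  obsP p r ℓ r / obsPA p r ℓ (PA r)

/-- A regular pattern graph on `𝓡`: `1_d` is a source, and every other pattern in `𝓡`
has a nonempty parent set inside `𝓡` consisting of strictly larger patterns. -/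
def IsRegularGraph (𝓡 : Finset (Pat d)) (PA : Pat d → Finset (Pat d)) : Prop :=
  PA (allOnes d) = ∅ ∧
    ∀ r ∈ 𝓡, r ≠ allOnes d → (PA r).Nonempty ∧ PA r ⊆ 𝓡 ∧ ∀ s ∈ PA r, r < s

/-- The selection odds model of `p` factorizes with respect to the pattern graph. -/
def SelOddsFactorizes (𝓡 : Finset (Pat d)) (PA : Pat d → Finset (Pat d))
    (p : (∀ j, X j) → Pat d → ℝ) : Prop :=
  ∀ r ∈ 𝓡, r ≠ allOnes d → ∀ ℓ, p ℓ r = jointA p ℓ (PA r) * odds p PA r ℓ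

/-- The pattern mixture model of `p` factorizes with respect to the pattern graph. -/
def PMMFactorizes (𝓡 : Finset (Pat d)) (PA : Pat d → Finset (Pat d))
    (p : (∀ j, X j) → Pat d → ℝ) : Prop :=
  ∀ r ∈ 𝓡, r ≠ allOnes d → ∀ ℓ,
    p ℓ r * obsPA p r ℓ (PA r) = jointA p ℓ (PA r) * obsP p r ℓ r

/-- A path from `u` to `v` in the pattern graph: a nonempty sequence
`u = r_0, r_1, …, r_m = v` of patterns in `𝓡` with `r_i ∈ PA(r_{i+1})`. -/
def IsPath (𝓡 : Finset (Pat d)) (PA : Pat d → Finset (Pat d)) (u v : Pat d)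
    (Ξ : List (Pat d)) : Prop :=
  Ξ ≠ [] ∧ Ξ.head? = some u ∧ Ξ.getLast? = some v ∧ (∀ q ∈ Ξ, q ∈ 𝓡) ∧
    Ξ.Chain' (fun a b => a ∈ PA b)

/-!
Under the fully observed pattern `1_d` nothing is missing, so `p(·, 1_d)` is read off the observed
data. For `r ≠ 1_d` the factorization expresses `p(·, r)` through `p` on the parents of `r` and
through the selection odds `O_r`, which involve only the observed mass under `r` and the observed
masses of the parents. Since parents are strictly larger patterns, downward induction on the
pattern order shows that `p` is determined by its observed-data distribution.
-/

theorem filter_agree_allOnes (ℓ : ∀ j, X j) :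
    univ.filter (fun ℓ' => agree (allOnes d) ℓ ℓ') = {ℓ} := by
  ext ℓ'
  simp [agree, allOnes, funext_iff, eq_comm]

theorem obsP_allOnes (p : (∀ j, X j) → Pat d → ℝ) (ℓ : ∀ j, X j) (s : Pat d) :
    obsP p (allOnes d) ℓ s = p ℓ s := by
  rw [obsP, filter_agree_allOnes, sum_singleton]

omit [∀ j, Fintype (X j)] [∀ j, DecidableEq (X j)] in
theorem jointA_congr {p p' : (∀ j, X j) → Pat d → ℝ} {ℓ : ∀ j, X j} {A : Finset (Pat d)}
    (h : ∀ s ∈ A, p ℓ s = p' ℓ s) : jointA p ℓ A = jointA p' ℓ A :=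
  sum_congr rfl h

theorem obsPA_congr {p p' : (∀ j, X j) → Pat d → ℝ} {A : Finset (Pat d)}
    (h : ∀ s ∈ A, ∀ ℓ, p ℓ s = p' ℓ s) (r : Pat d) (ℓ : ∀ j, X j) :
    obsPA p r ℓ A = obsPA p' r ℓ A :=
  sum_congr rfl fun s hs => sum_congr rfl fun ℓ' _ => h s hs ℓ'

theorem odds_congr {p p' : (∀ j, X j) → Pat d → ℝ} {PA : Pat d → Finset (Pat d)} {r : Pat d}
    {ℓ : ∀ j, X j} (hobs : obsP p r ℓ r = obsP p' r ℓ r)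
    (hPA : ∀ s ∈ PA r, ∀ ℓ, p ℓ s = p' ℓ s) : odds p PA r ℓ = odds p' PA r ℓ := by
  rw [odds, odds, hobs, obsPA_congr hPA]

theorem SelOddsFactorizes.eq_of_eq_on_parents {𝓡 : Finset (Pat d)} {PA : Pat d → Finset (Pat d)}
    {p p' : (∀ j, X j) → Pat d → ℝ} (hfact : SelOddsFactorizes 𝓡 PA p)
    (hfact' : SelOddsFactorizes 𝓡 PA p') {r : Pat d} (hr : r ∈ 𝓡) (hr1 : r ≠ allOnes d)
    (hobs : ∀ ℓ, obsP p r ℓ r = obsP p' r ℓ r) (hPA : ∀ s ∈ PA r, ∀ ℓ, p ℓ s = p' ℓ s)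
    (ℓ : ∀ j, X j) : p ℓ r = p' ℓ r := by
  rw [hfact r hr hr1 ℓ, hfact' r hr hr1 ℓ, odds_congr (hobs ℓ) hPA,
    jointA_congr fun s hs => hPA s hs ℓ]

theorem SelOddsFactorizes.eq_of_obsP_eq {𝓡 : Finset (Pat d)} (h𝓡 : allOnes d ∈ 𝓡)
    {PA : Pat d → Finset (Pat d)} (hG : IsRegularGraph 𝓡 PA)
    {p p' : (∀ j, X j) → Pat d → ℝ} (hfact : SelOddsFactorizes 𝓡 PA p)
    (hfact' : SelOddsFactorizes 𝓡 PA p') (hobs : ∀ r ∈ 𝓡, ∀ ℓ, obsP p r ℓ r = obsP p' r ℓ r)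
    (r : Pat d) (hr : r ∈ 𝓡) (ℓ : ∀ j, X j) : p ℓ r = p' ℓ r := by
  induction r using WellFoundedGT.induction generalizing ℓ with
  | ind r ih =>
    by_cases hr1 : r = allOnes d
    · subst hr1
      rw [← obsP_allOnes p, ← obsP_allOnes p', hobs _ h𝓡]
    · obtain ⟨-, hsub, hlt⟩ := hG.2 r hr hr1
      exact hfact.eq_of_eq_on_parents hfact' hr hr1 (hobs r hr)
        (fun s hs => ih s (hlt s hs) (hsub hs)) ℓ

theorem selection_odds_identification_general
    (𝓡 : Finset (Pat d)) (h𝓡 : allOnes d ∈ 𝓡)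
    (PA : Pat d → Finset (Pat d)) (hG : IsRegularGraph 𝓡 PA)
    (p p' : (∀ j, X j) → Pat d → ℝ)
    (hfact : SelOddsFactorizes 𝓡 PA p) (hfact' : SelOddsFactorizes 𝓡 PA p')
    (hobs : ∀ r ∈ 𝓡, ∀ ℓ, obsP p r ℓ r = obsP p' r ℓ r) :
    (∀ ℓ, ∀ r ∈ 𝓡, p ℓ r = p' ℓ r) ∧
    (∀ ℓ, p ℓ (allOnes d) / jointA p ℓ 𝓡 = p' ℓ (allOnes d) / jointA p' ℓ 𝓡) := by
  have hpp' := hfact.eq_of_obsP_eq h𝓡 hG hfact' hobs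
  refine ⟨fun ℓ r hr => hpp' r hr ℓ, fun ℓ => ?_⟩
  rw [hpp' _ h𝓡 ℓ, jointA_congr fun s hs => hpp' s hs ℓ]

/-- **Identifiability under selection-odds factorization.** Two joint pmfs with the same
observed-data distribution that both factorize w.r.t. the same regular pattern graph are
equal; in particular the propensity score is identified. -/
theorem selection_odds_identification [∀ j, Nonempty (X j)]
    (𝓡 : Finset (Pat d)) (h𝓡 : allOnes d ∈ 𝓡)
    (PA : Pat d → Finset (Pat d)) (hG : IsRegularGraph 𝓡 PA)
    (p p' : (∀ j, X j) → Pat d → ℝ)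
    (hpmf : IsJointPMF 𝓡 p) (hpmf' : IsJointPMF 𝓡 p')
    (hpos : MargPos 𝓡 p) (hpos' : MargPos 𝓡 p')
    (hfact : SelOddsFactorizes 𝓡 PA p) (hfact' : SelOddsFactorizes 𝓡 PA p')
    (hobs : ∀ r ∈ 𝓡, ∀ ℓ, obsP p r ℓ r = obsP p' r ℓ r) :
    (∀ ℓ, ∀ r ∈ 𝓡, p ℓ r = p' ℓ r) ∧
    (∀ ℓ, p ℓ (allOnes d) / jointA p ℓ 𝓡 = p' ℓ (allOnes d) / jointA p' ℓ 𝓡) :=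
  selection_odds_identification_general 𝓡 h𝓡 PA hG p p' hfact hfact' hobs
end
end

section
/- Let G be a regular pattern graph on a pattern set 𝓡 and let p be a joint pmf satisfying marginal positivity whose selection odds model factorizes with respect to G. Then for every ℓ: (i) Σ_{r ∈ 𝓡} Σ_{Ξ ∈ Π_r} π(ℓ) · ∏_{s ∈ Ξ, s ≠ 1_d} O_s(ℓ) = 1; (ii) for every r ∈ 𝓡, p(ℓ, r)/p(ℓ, 𝓡) = Σ_{Ξ ∈ Π_r} π(ℓ) · ∏_{s ∈ Ξ, s ≠ 1_d} O_s(ℓ); equivalently, Q_r(ℓ) = Σ_{Ξ ∈ Π_r} ∏_{s ∈ Ξ, s ≠ 1_d} O_s(ℓ) for every r ∈ 𝓡 and π(ℓ) = 1/(Σ_{r ∈ 𝓡} Σ_{Ξ ∈ Π_r} ∏_{s ∈ Ξ, s ≠ 1_d} O_s(ℓ)). -/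
open Finset

noncomputable section

variable {d : ℕ}


variable {X : Fin d → Type*} [∀ j, Fintype (X j)] [∀ j, DecidableEq (X j)]

/-!
Dividing the factorization `p(ℓ, r) = p(ℓ, PA(r)) · O_r(ℓ)` by `p(ℓ, 1_d)` gives the recursion
`Q_r = (Σ_{s ∈ PA(r)} Q_s) · O_r` with `Q_{1_d} = 1`. Every path to `r ≠ 1_d` is, uniquely, a path
to a parent of `r` extended by `r`, so the path sums `Σ_{Ξ ∈ Π_r} ∏_{s ∈ Ξ} w(s)` obey the same
recursion, and induction along `>` (parents are strictly larger) identifies the two. Summing over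
`r ∈ 𝓡` gives `p(ℓ, 𝓡) / p(ℓ, 1_d) = 1 / π(ℓ)`. Marginal positivity at `1_d` is `p(ℓ, 1_d) > 0`,
which makes every division legitimate.
-/

section Paths

variable {𝓡 : Finset (Pat d)} {PA : Pat d → Finset (Pat d)} {u v r : Pat d} {Ξ : List (Pat d)}

theorem isPath_iff_isChain :
    IsPath 𝓡 PA u v Ξ ↔ Ξ ≠ [] ∧ Ξ.head? = some u ∧ Ξ.getLast? = some v ∧ (∀ q ∈ Ξ, q ∈ 𝓡) ∧
      Ξ.IsChain (fun a b => a ∈ PA b) :=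
  Iff.rfl

theorem isPath_append_singleton_iff (hΞ : Ξ ≠ []) :
    IsPath 𝓡 PA u r (Ξ ++ [r]) ↔
      r ∈ 𝓡 ∧ Ξ.getLast hΞ ∈ PA r ∧ IsPath 𝓡 PA u (Ξ.getLast hΞ) Ξ := by
  simp only [isPath_iff_isChain, List.isChain_append, List.getLast?_eq_some_getLast hΞ,
    List.head?_append_of_ne_nil _ hΞ, List.mem_append, List.mem_singleton]
  grind

theorem isPath_self_iff (hu : u ∈ 𝓡) (hPA : PA u = ∅) :
    IsPath 𝓡 PA u u Ξ ↔ Ξ = [u] := by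
  refine ⟨fun hpath => ?_, fun h => ?_⟩
  · obtain ⟨hne, -, hlast, -, -⟩ := id hpath
    rcases List.eq_nil_or_concat' Ξ with h | ⟨L, b, rfl⟩
    · exact absurd h hne
    rcases eq_or_ne L [] with rfl | hL
    · simpa using hlast
    · obtain rfl : b = u := by simpa using hlast
      have hparent := ((isPath_append_singleton_iff hL).1 hpath).2.1
      simp [hPA] at hparent
  · subst h; simp [isPath_iff_isChain, hu]

theorem isPath_iff_exists_parent (hr : r ≠ u) :
    IsPath 𝓡 PA u r Ξ ↔ r ∈ 𝓡 ∧ ∃ s ∈ PA r, ∃ Ξ', IsPath 𝓡 PA u s Ξ' ∧ Ξ = Ξ' ++ [r] := by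
  refine ⟨fun hpath => ?_, ?_⟩
  · obtain ⟨hne, hhead, hlast, -, -⟩ := id hpath
    rcases List.eq_nil_or_concat' Ξ with h | ⟨L, b, rfl⟩
    · exact absurd h hne
    obtain rfl : b = r := by simpa using hlast
    have hL : L ≠ [] := by rintro rfl; exact hr (by simpa using hhead)
    obtain ⟨hr𝓡, hs, hpathL⟩ := (isPath_append_singleton_iff hL).1 hpath
    exact ⟨hr𝓡, _, hs, L, hpathL, rfl⟩
  · rintro ⟨hr𝓡, s, hs, Ξ', hΞ', rfl⟩
    have hne := hΞ'.1
    obtain rfl : Ξ'.getLast hne = s := by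
      simpa [List.getLast?_eq_some_getLast hne] using hΞ'.2.2.1
    exact (isPath_append_singleton_iff hne).2 ⟨hr𝓡, hs, hΞ'⟩

theorem IsPath.target_unique {s t : Pat d} (hs : IsPath 𝓡 PA u s Ξ) (ht : IsPath 𝓡 PA u t Ξ) :
    s = t :=
  Option.some_injective _ (hs.2.2.1.symm.trans ht.2.2.1)

variable {Paths : Pat d → Finset (List (Pat d))}

theorem sum_paths_eq_sum_parents {M : Type*} [AddCommMonoid M] (hr : r ∈ 𝓡) (hru : r ≠ u)
    (hPaths : ∀ r Ξ, Ξ ∈ Paths r ↔ IsPath 𝓡 PA u r Ξ) (f : List (Pat d) → M) :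
    ∑ Ξ ∈ Paths r, f Ξ = ∑ s ∈ PA r, ∑ Ξ ∈ Paths s, f (Ξ ++ [r]) := by
  rw [sum_sigma']
  refine (sum_nbij (fun x : Σ _ : Pat d, List (Pat d) => x.2 ++ [r]) ?_ ?_ ?_ fun _ _ => rfl).symm
  · rintro ⟨s, Ξ⟩ h
    rw [mem_sigma, hPaths] at h
    exact (hPaths r _).2 ((isPath_iff_exists_parent hru).2 ⟨hr, s, h.1, Ξ, h.2, rfl⟩)
  · rintro ⟨s₁, Ξ₁⟩ h₁ ⟨s₂, Ξ₂⟩ h₂ heq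
    obtain rfl : Ξ₁ = Ξ₂ := List.append_left_injective [r] heq
    rw [coe_sigma, Set.mem_sigma_iff, mem_coe, mem_coe, hPaths] at h₁ h₂
    obtain rfl : s₁ = s₂ := h₁.2.target_unique h₂.2
    rfl
  · intro Ξ hΞ
    obtain ⟨-, s, hs, Ξ', hΞ', rfl⟩ := (isPath_iff_exists_parent hru).1 ((hPaths r Ξ).1 hΞ)
    exact ⟨⟨s, Ξ'⟩, mem_sigma.2 ⟨hs, (hPaths s Ξ').2 hΞ'⟩, rfl⟩

theorem eq_sum_prod_paths_of_recursion {R : Type*} [CommSemiring R]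
    (h𝓡 : allOnes d ∈ 𝓡) (hG : IsRegularGraph 𝓡 PA)
    (hPaths : ∀ r Ξ, Ξ ∈ Paths r ↔ IsPath 𝓡 PA (allOnes d) r Ξ) {q w : Pat d → R}
    (hq₁ : q (allOnes d) = w (allOnes d))
    (hq : ∀ r ∈ 𝓡, r ≠ allOnes d → q r = (∑ s ∈ PA r, q s) * w r) :
    ∀ r ∈ 𝓡, q r = ∑ Ξ ∈ Paths r, (Ξ.map w).prod := by
  intro r
  induction r using WellFoundedGT.induction with
  | _ r ih =>
  intro hr
  by_cases hr₁ : r = allOnes d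
  · subst hr₁
    have hroot : Paths (allOnes d) = {[allOnes d]} := by
      ext Ξ; rw [hPaths, isPath_self_iff h𝓡 hG.1, mem_singleton]
    simp [hroot, hq₁]
  · obtain ⟨-, hsub, hgt⟩ := hG.2 r hr hr₁
    rw [hq r hr hr₁, sum_paths_eq_sum_parents hr hr₁ hPaths, sum_mul]
    refine sum_congr rfl fun s hs => ?_
    rw [ih s (hgt s hs) (hsub hs), sum_mul]
    simp [List.prod_append]

end Paths

theorem path_decomposition_general
    (𝓡 : Finset (Pat d)) (h𝓡 : allOnes d ∈ 𝓡)
    (PA : Pat d → Finset (Pat d)) (hG : IsRegularGraph 𝓡 PA)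
    (p : (∀ j, X j) → Pat d → ℝ)
    (hpmf : IsJointPMF 𝓡 p) (hpos : MargPos 𝓡 p)
    (hfact : SelOddsFactorizes 𝓡 PA p)
    (Paths : Pat d → Finset (List (Pat d)))
    (hPaths : ∀ r, ∀ Ξ, Ξ ∈ Paths r ↔ IsPath 𝓡 PA (allOnes d) r Ξ) :
    (∀ ℓ, ∑ r ∈ 𝓡, ∑ Ξ ∈ Paths r,
        (p ℓ (allOnes d) / jointA p ℓ 𝓡) *
          (Ξ.map fun s => if s = allOnes d then (1:ℝ) else odds p PA s ℓ).prod = 1) ∧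
    (∀ r ∈ 𝓡, ∀ ℓ, p ℓ r / jointA p ℓ 𝓡
        = ∑ Ξ ∈ Paths r, (p ℓ (allOnes d) / jointA p ℓ 𝓡) *
            (Ξ.map fun s => if s = allOnes d then (1:ℝ) else odds p PA s ℓ).prod) ∧
    (∀ r ∈ 𝓡, ∀ ℓ, p ℓ r / p ℓ (allOnes d)
        = ∑ Ξ ∈ Paths r,
            (Ξ.map fun s => if s = allOnes d then (1:ℝ) else odds p PA s ℓ).prod) ∧
    (∀ ℓ, p ℓ (allOnes d) / jointA p ℓ 𝓡
        = 1 / ∑ r ∈ 𝓡, ∑ Ξ ∈ Paths r,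
            (Ξ.map fun s => if s = allOnes d then (1:ℝ) else odds p PA s ℓ).prod) := by
  have hp₁ (ℓ) : 0 < p ℓ (allOnes d) := obsP_allOnes p ℓ _ ▸ hpos ℓ _ h𝓡
  have hA (ℓ) : 0 < jointA p ℓ 𝓡 := (hp₁ ℓ).trans_le (single_le_sum (hpmf.1 ℓ) h𝓡)
  have hQ (ℓ) : ∀ r ∈ 𝓡, p ℓ r / p ℓ (allOnes d) = ∑ Ξ ∈ Paths r,
      (Ξ.map fun s => if s = allOnes d then (1:ℝ) else odds p PA s ℓ).prod := by
    refine eq_sum_prod_paths_of_recursion h𝓡 hG hPaths (by simp [(hp₁ ℓ).ne']) fun r hr hr₁ => ?_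
    simp only [if_neg hr₁]
    rw [hfact r hr hr₁ ℓ, jointA, mul_div_right_comm, sum_div]
  have hQsum (ℓ) : ∑ r ∈ 𝓡, ∑ Ξ ∈ Paths r,
      (Ξ.map fun s => if s = allOnes d then (1:ℝ) else odds p PA s ℓ).prod
        = jointA p ℓ 𝓡 / p ℓ (allOnes d) := by
    rw [jointA, sum_div]
    exact sum_congr rfl fun r hr => (hQ ℓ r hr).symm
  refine ⟨fun ℓ => ?_, fun r hr ℓ => ?_, fun r hr ℓ => hQ ℓ r hr, fun ℓ => ?_⟩
  · simp_rw [← mul_sum]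
    rw [hQsum]
    field_simp [(hp₁ ℓ).ne', (hA ℓ).ne']
  · rw [← mul_sum, ← hQ ℓ r hr]
    field_simp [(hp₁ ℓ).ne']
  · rw [hQsum, one_div_div]

/-- **Proposition (path decomposition).** Under selection-odds factorization w.r.t. a
regular pattern graph, the path-specific scores `κ(Ξ|ℓ) = π(ℓ)·∏_{s∈Ξ, s≠1_d} O_s(ℓ)` sum
to one, `P(R = r|ℓ)` is the sum of the scores of the paths ending at `r`, and equivalently
`Q_r(ℓ) = Σ_{Ξ∈Π_r} ∏_{s∈Ξ, s≠1_d} O_s(ℓ)` and `π(ℓ)` is one over the total sum. -/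
theorem path_decomposition [∀ j, Nonempty (X j)]
    (𝓡 : Finset (Pat d)) (h𝓡 : allOnes d ∈ 𝓡)
    (PA : Pat d → Finset (Pat d)) (hG : IsRegularGraph 𝓡 PA)
    (p : (∀ j, X j) → Pat d → ℝ)
    (hpmf : IsJointPMF 𝓡 p) (hpos : MargPos 𝓡 p)
    (hfact : SelOddsFactorizes 𝓡 PA p)
    (Paths : Pat d → Finset (List (Pat d)))
    (hPaths : ∀ r, ∀ Ξ, Ξ ∈ Paths r ↔ IsPath 𝓡 PA (allOnes d) r Ξ) :
    (∀ ℓ, ∑ r ∈ 𝓡, ∑ Ξ ∈ Paths r,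
        (p ℓ (allOnes d) / jointA p ℓ 𝓡) *
          (Ξ.map fun s => if s = allOnes d then (1:ℝ) else odds p PA s ℓ).prod = 1) ∧
    (∀ r ∈ 𝓡, ∀ ℓ, p ℓ r / jointA p ℓ 𝓡
        = ∑ Ξ ∈ Paths r, (p ℓ (allOnes d) / jointA p ℓ 𝓡) *
            (Ξ.map fun s => if s = allOnes d then (1:ℝ) else odds p PA s ℓ).prod) ∧
    (∀ r ∈ 𝓡, ∀ ℓ, p ℓ r / p ℓ (allOnes d)
        = ∑ Ξ ∈ Paths r,
            (Ξ.map fun s => if s = allOnes d then (1:ℝ) else odds p PA s ℓ).prod) ∧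
    (∀ ℓ, p ℓ (allOnes d) / jointA p ℓ 𝓡
        = 1 / ∑ r ∈ 𝓡, ∑ Ξ ∈ Paths r,
            (Ξ.map fun s => if s = allOnes d then (1:ℝ) else odds p PA s ℓ).prod) :=
  path_decomposition_general 𝓡 h𝓡 PA hG p hpmf hpos hfact Paths hPaths
end
end

section
/- Let G be a regular pattern graph on a pattern set 𝓡 and let p be a joint pmf satisfying marginal positivity. Then the following two statements are equivalent: (i) the selection odds model of p factorizes with respect to G, i.e. p(ℓ, r) = p(ℓ, PA(r)) · O_r(ℓ) for every r ∈ 𝓡 with r ≠ 1_d and every ℓ; (ii) the pattern mixture model of p factorizes with respect to G, i.e. p(ℓ, r) · p_r(ℓ, PA(r)) = p(ℓ, PA(r)) · p_r(ℓ, r) for every r ∈ 𝓡 with r ≠ 1_d and every ℓ. -/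
/-!
Every parent `s` of `r` is a strictly larger pattern, so `ℓ' ~_s ℓ` implies `ℓ' ~_r ℓ` and
`p_r(ℓ, s) ≥ p_s(ℓ, s) > 0` by marginal positivity. Hence the denominator `p_r(ℓ, PA(r))` of the
selection odds is positive, and the two factorization identities are the same equation before
and after clearing it.
-/

open Finset

noncomputable section

variable {d : ℕ}


variable {X : Fin d → Type*} [∀ j, Fintype (X j)] [∀ j, DecidableEq (X j)]

theorem agree.of_le {X : Fin d → Type*} {r s : Pat d} (hrs : r ≤ s) {ℓ ℓ' : ∀ j, X j}
    (h : agree s ℓ ℓ') : agree r ℓ ℓ' :=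
  fun j hj => h j (le_antisymm (Bool.le_true _) (hj ▸ hrs j))

theorem obsP_le_obsP_of_le {p : (∀ j, X j) → Pat d → ℝ} {t : Pat d} (hp : ∀ ℓ, 0 ≤ p ℓ t)
    {r s : Pat d} (hrs : r ≤ s) (ℓ : ∀ j, X j) : obsP p s ℓ t ≤ obsP p r ℓ t :=
  sum_le_sum_of_subset_of_nonneg
    (fun ℓ' => by simpa only [mem_filter, mem_univ, true_and] using agree.of_le hrs)
    (fun ℓ' _ _ => hp ℓ')

theorem obsPA_parents_pos {𝓡 : Finset (Pat d)} {PA : Pat d → Finset (Pat d)}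
    (hG : IsRegularGraph 𝓡 PA) {p : (∀ j, X j) → Pat d → ℝ} (hp : ∀ ℓ, ∀ r ∈ 𝓡, 0 ≤ p ℓ r)
    (hpos : MargPos 𝓡 p) {r : Pat d} (hr : r ∈ 𝓡) (hr1 : r ≠ allOnes d) (ℓ : ∀ j, X j) :
    0 < obsPA p r ℓ (PA r) := by
  obtain ⟨⟨s, hs⟩, hPA, hlt⟩ := hG.2 r hr hr1
  have hobs_nonneg : ∀ t ∈ PA r, 0 ≤ obsP p r ℓ t :=
    fun t ht => sum_nonneg fun ℓ' _ => hp ℓ' t (hPA ht)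
  calc 0 < obsP p s ℓ s := hpos ℓ s (hPA hs)
    _ ≤ obsP p r ℓ s := obsP_le_obsP_of_le (fun ℓ' => hp ℓ' s (hPA hs)) (hlt s hs).le ℓ
    _ ≤ obsPA p r ℓ (PA r) := single_le_sum hobs_nonneg hs

theorem selOddsFactorizes_iff_pmmFactorizes {𝓡 : Finset (Pat d)} {PA : Pat d → Finset (Pat d)}
    {p : (∀ j, X j) → Pat d → ℝ}
    (hden : ∀ r ∈ 𝓡, r ≠ allOnes d → ∀ ℓ, obsPA p r ℓ (PA r) ≠ 0) :
    SelOddsFactorizes 𝓡 PA p ↔ PMMFactorizes 𝓡 PA p := by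
  refine forall₄_congr fun r hr hr1 ℓ => ?_
  rw [odds, ← mul_div_assoc, eq_div_iff (hden r hr hr1 ℓ)]

theorem selection_odds_iff_pattern_mixture_general
    (𝓡 : Finset (Pat d))
    (PA : Pat d → Finset (Pat d)) (hG : IsRegularGraph 𝓡 PA)
    (p : (∀ j, X j) → Pat d → ℝ)
    (hpmf : IsJointPMF 𝓡 p) (hpos : MargPos 𝓡 p) :
    SelOddsFactorizes 𝓡 PA p ↔ PMMFactorizes 𝓡 PA p :=
  selOddsFactorizes_iff_pmmFactorizes fun _ hr hr1 ℓ =>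
    (obsPA_parents_pos hG hpmf.1 hpos hr hr1 ℓ).ne'

/-- **Theorem 3 (equivalence).** For a regular pattern graph and a joint pmf with marginal
positivity, the selection odds model factorizes w.r.t. `G` if and only if the pattern
mixture model factorizes w.r.t. `G`. -/
theorem selection_odds_iff_pattern_mixture [∀ j, Nonempty (X j)]
    (𝓡 : Finset (Pat d)) (h𝓡 : allOnes d ∈ 𝓡)
    (PA : Pat d → Finset (Pat d)) (hG : IsRegularGraph 𝓡 PA)
    (p : (∀ j, X j) → Pat d → ℝ)
    (hpmf : IsJointPMF 𝓡 p) (hpos : MargPos 𝓡 p) :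
    SelOddsFactorizes 𝓡 PA p ↔ PMMFactorizes 𝓡 PA p :=
  selection_odds_iff_pattern_mixture_general 𝓡 PA hG p hpmf hpos
end
end

section
/- Let 𝓡 be a pattern set with a regular pattern graph G, let p be a joint pmf with p(ℓ, r) > 0 for every ℓ and every r ∈ 𝓡 (full positivity), fix r ∈ 𝓡 with r ≠ 1_d, and let g be a real-valued function of ℓ depending only on the coordinates j with r j = false (the entries unobserved under r). Then the following are equivalent: (i) p(ℓ, r) = p(ℓ, PA(r)) · O_r(ℓ) · g(ℓ) for every ℓ (the selection odds of r against its parents equal the observed odds times the tilt g); (ii) p(ℓ, r) · p_r(ℓ, PA(r)) = p(ℓ, PA(r)) · p_r(ℓ, r) · g(ℓ) for every ℓ (the extrapolation distribution of pattern r equals that of R ∈ PA(r) times the tilt g). -/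
open Finset

noncomputable section

variable {d : ℕ}


variable {X : Fin d → Type*} [∀ j, Fintype (X j)] [∀ j, DecidableEq (X j)]

/-! At each `ℓ`, (i) and (ii) are the same equation, (ii) being (i) with the denominator
`p_r(ℓ, PA(r))` of `O_r(ℓ)` cleared; that denominator is positive by full positivity, since
`PA(r)` is a nonempty subset of `𝓡`. -/

theorem obsP_pos {p : (∀ j, X j) → Pat d → ℝ} {s : Pat d} (hp : ∀ ℓ, 0 < p ℓ s)
    (r : Pat d) (ℓ : ∀ j, X j) : 0 < obsP p r ℓ s :=
  sum_pos (fun ℓ' _ => hp ℓ') ⟨ℓ, mem_filter.mpr ⟨mem_univ ℓ, fun _ _ => rfl⟩⟩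

theorem obsPA_pos {p : (∀ j, X j) → Pat d → ℝ} {A : Finset (Pat d)} (hA : A.Nonempty)
    (hp : ∀ ℓ, ∀ s ∈ A, 0 < p ℓ s) (r : Pat d) (ℓ : ∀ j, X j) : 0 < obsPA p r ℓ A :=
  sum_pos (fun s hs => obsP_pos (fun ℓ' => hp ℓ' s hs) r ℓ) hA

theorem eq_mul_odds_mul_iff {p : (∀ j, X j) → Pat d → ℝ} {PA : Pat d → Finset (Pat d)}
    {r : Pat d} {ℓ : ∀ j, X j} (hPA : obsPA p r ℓ (PA r) ≠ 0) (a b c : ℝ) :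
    a = b * (odds p PA r ℓ * c) ↔ a * obsPA p r ℓ (PA r) = b * (obsP p r ℓ r * c) := by
  rw [← eq_div_iff hPA, odds]
  ring_nf

theorem tilted_selection_odds_iff_tilted_extrapolation_general
    (𝓡 : Finset (Pat d))
    (PA : Pat d → Finset (Pat d)) (hG : IsRegularGraph 𝓡 PA)
    (p : (∀ j, X j) → Pat d → ℝ)
    (hpos : FullPos 𝓡 p)
    (r : Pat d) (hr : r ∈ 𝓡) (hr1 : r ≠ allOnes d)
    (g : (∀ j, X j) → ℝ) :
    (∀ ℓ, p ℓ r = jointA p ℓ (PA r) * (odds p PA r ℓ * g ℓ)) ↔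
    (∀ ℓ, p ℓ r * obsPA p r ℓ (PA r) = jointA p ℓ (PA r) * (obsP p r ℓ r * g ℓ)) := by
  obtain ⟨hPA_nonempty, hPA_sub, -⟩ := hG.2 r hr hr1
  have hPA_pos : ∀ ℓ, 0 < obsPA p r ℓ (PA r) :=
    (obsPA_pos hPA_nonempty fun ℓ s hs => hpos ℓ s (hPA_sub hs)) r
  exact forall_congr' fun ℓ => eq_mul_odds_mul_iff (hPA_pos ℓ).ne' _ _ _

/-- **Theorem (sensitivity analysis / exponential tilting).** For a tilt `g` depending
only on the entries unobserved under `r`, perturbing the selection odds of `r` by `g`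
is equivalent to perturbing the extrapolation distribution of `r` by `g`. -/
theorem tilted_selection_odds_iff_tilted_extrapolation [∀ j, Nonempty (X j)]
    (𝓡 : Finset (Pat d)) (h𝓡 : allOnes d ∈ 𝓡)
    (PA : Pat d → Finset (Pat d)) (hG : IsRegularGraph 𝓡 PA)
    (p : (∀ j, X j) → Pat d → ℝ)
    (hpmf : IsJointPMF 𝓡 p) (hpos : FullPos 𝓡 p)
    (r : Pat d) (hr : r ∈ 𝓡) (hr1 : r ≠ allOnes d)
    (g : (∀ j, X j) → ℝ)
    (hg : ∀ ℓ ℓ', (∀ j, r j = false → ℓ j = ℓ' j) → g ℓ = g ℓ') :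
    (∀ ℓ, p ℓ r = jointA p ℓ (PA r) * (odds p PA r ℓ * g ℓ)) ↔
    (∀ ℓ, p ℓ r * obsPA p r ℓ (PA r) = jointA p ℓ (PA r) * (obsP p r ℓ r * g ℓ)) :=
  tilted_selection_odds_iff_tilted_extrapolation_general 𝓡 PA hG p hpos r hr hr1 g
end
end

section
/- Let 𝓡 be a pattern set containing 1_d and let p be a joint pmf with p(ℓ, 1_d) > 0 for every ℓ; set Q_r(ℓ) = p(ℓ, r)/p(ℓ, 1_d). Then the following two sets of functions coincide: (a) the set of observable functions w with Σ_{r ∈ 𝓡} w(ℓ, r) · p(ℓ, r) = 0 for every ℓ (conditional mean zero given L); and (b) the set of functions of the form (ℓ, ρ) ↦ Σ_{r ∈ 𝓡, r ≠ 1_d} (1{ρ = r} − Q_r(ℓ) · 1{ρ = 1_d}) · h(ℓ, r), where h ranges over all observable functions. -/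
/-!
On patterns `r ≠ 1_d` the augmentation form equals `h(ℓ, r)`, while its value at `1_d` is forced to be
`−Σ_{r ≠ 1_d} h(ℓ, r) p(ℓ, r) / p(ℓ, 1_d)`; with `h = w` this is the mean-zero condition solved for
`w(ℓ, 1_d)`. Observability at `1_d` is automatic, since `~_{1_d}` is equality.
-/

open Finset

noncomputable section

variable {d : ℕ}


variable {X : Fin d → Type*} [∀ j, Fintype (X j)] [∀ j, DecidableEq (X j)]

/-- A function of `(ℓ, r)` is observable on `𝓡` if, for each pattern `r ∈ 𝓡`, it depends
on `ℓ` only through the coordinates observed under `r`. -/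
def Observable (𝓡 : Finset (Pat d)) {X : Fin d → Type*}
    (w : (∀ j, X j) → Pat d → ℝ) : Prop :=
  ∀ r ∈ 𝓡, ∀ ℓ ℓ', agree r ℓ ℓ' → w ℓ r = w ℓ' r

/-- The augmentation form of the theorem at a fixed `ℓ`, with `o = 1_d`, `q = p ℓ`, `g = h ℓ`. -/
def augmentAt {ι : Type*} [DecidableEq ι] (s : Finset ι) (o : ι) (q g : ι → ℝ) (ρ : ι) : ℝ :=
  ∑ r ∈ s.erase o,
    ((if ρ = r then (1:ℝ) else 0) - (q r / q o) * (if ρ = o then (1:ℝ) else 0)) * g r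

section augmentAt

variable {ι : Type*} [DecidableEq ι] {s : Finset ι} {o : ι} {q g w : ι → ℝ}

theorem sum_mul_eq_zero_iff_eq_div (ho : o ∈ s) (hq : q o ≠ 0) :
    ∑ ρ ∈ s, w ρ * q ρ = 0 ↔ w o = -(∑ ρ ∈ s.erase o, w ρ * q ρ) / q o := by
  rw [← add_sum_erase s _ ho, eq_div_iff hq]
  constructor <;> intro h <;> linarith

theorem augmentAt_of_ne {ρ : ι} (hρ : ρ ∈ s) (hρo : ρ ≠ o) : augmentAt s o q g ρ = g ρ := by
  rw [augmentAt, Finset.sum_eq_single_of_mem ρ (mem_erase.2 ⟨hρo, hρ⟩)]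
  · simp [hρo]
  · intro r _ hrρ
    simp [hrρ.symm, hρo]

theorem augmentAt_self : augmentAt s o q g o = -(∑ r ∈ s.erase o, g r * q r) / q o := by
  rw [augmentAt, neg_div, Finset.sum_div, ← Finset.sum_neg_distrib]
  refine Finset.sum_congr rfl fun r hr => ?_
  rw [if_neg (ne_of_mem_erase hr).symm, if_pos rfl]
  ring

theorem eqOn_augmentAt_iff (ho : o ∈ s) :
    (∀ ρ ∈ s, w ρ = augmentAt s o q g ρ) ↔
      (∀ ρ ∈ s.erase o, w ρ = g ρ) ∧ w o = -(∑ r ∈ s.erase o, g r * q r) / q o := by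
  refine ⟨fun hw => ⟨fun ρ hρ => ?_, ?_⟩, fun ⟨hne, hself⟩ ρ hρ => ?_⟩
  · obtain ⟨hρo, hρs⟩ := mem_erase.1 hρ
    rw [hw ρ hρs, augmentAt_of_ne hρs hρo]
  · rw [hw o ho, augmentAt_self]
  · by_cases hρo : ρ = o
    · rw [hρo, hself, augmentAt_self]
    · rw [augmentAt_of_ne hρ hρo, hne ρ (mem_erase.2 ⟨hρo, hρ⟩)]

end augmentAt

theorem eq_of_agree_allOnes {X : Fin d → Type*} {ℓ ℓ' : ∀ j, X j} (h : agree (allOnes d) ℓ ℓ') :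
    ℓ = ℓ' :=
  funext fun j => h j rfl

theorem Observable.of_eq_on_erase_allOnes {X : Fin d → Type*} {𝓡 : Finset (Pat d)}
    {w h : (∀ j, X j) → Pat d → ℝ} (hh : Observable 𝓡 h)
    (hwh : ∀ ℓ, ∀ r ∈ 𝓡.erase (allOnes d), w ℓ r = h ℓ r) : Observable 𝓡 w := by
  intro r hr ℓ ℓ' hag
  by_cases hr1 : r = allOnes d
  · subst hr1
    rw [eq_of_agree_allOnes hag]
  · have hr' : r ∈ 𝓡.erase (allOnes d) := mem_erase.2 ⟨hr1, hr⟩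
    rw [hwh ℓ r hr', hwh ℓ' r hr', hh r hr ℓ ℓ' hag]

theorem augmentation_space_ccmv_general
    (𝓡 : Finset (Pat d)) (h𝓡 : allOnes d ∈ 𝓡)
    (p : (∀ j, X j) → Pat d → ℝ)
    (hpos : ∀ ℓ, 0 < p ℓ (allOnes d)) :
    ∀ w : (∀ j, X j) → Pat d → ℝ,
      (Observable 𝓡 w ∧ ∀ ℓ, ∑ r ∈ 𝓡, w ℓ r * p ℓ r = 0) ↔
      (∃ h : (∀ j, X j) → Pat d → ℝ, Observable 𝓡 h ∧
        ∀ ℓ, ∀ ρ ∈ 𝓡, w ℓ ρ =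
          ∑ r ∈ 𝓡.erase (allOnes d),
            ((if ρ = r then (1:ℝ) else 0)
              - (p ℓ r / p ℓ (allOnes d)) * (if ρ = allOnes d then (1:ℝ) else 0))
              * h ℓ r) := by
  intro w
  have mean_zero_iff ℓ := sum_mul_eq_zero_iff_eq_div (w := w ℓ) h𝓡 (hpos ℓ).ne'
  change _ ↔ ∃ h, Observable 𝓡 h ∧ ∀ ℓ, ∀ ρ ∈ 𝓡, w ℓ ρ = augmentAt 𝓡 (allOnes d) (p ℓ) (h ℓ) ρ
  simp only [eqOn_augmentAt_iff h𝓡]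
  constructor
  · rintro ⟨hobs, hmean⟩
    exact ⟨w, hobs, fun ℓ => ⟨fun _ _ => rfl, (mean_zero_iff ℓ).1 (hmean ℓ)⟩⟩
  · rintro ⟨h, hobs, hw⟩
    have hwh ℓ := (hw ℓ).1
    refine ⟨hobs.of_eq_on_erase_allOnes hwh, fun ℓ => (mean_zero_iff ℓ).2 ?_⟩
    rw [(hw ℓ).2, Finset.sum_congr rfl fun r hr => by rw [← hwh ℓ r hr]]

/-- **Lemma (augmentation space).** The space of observable functions with conditional mean
zero given `L` coincides with the space of functions of the form
`(ℓ, ρ) ↦ Σ_{r ≠ 1_d} (1{ρ = r} − Q_r(ℓ)·1{ρ = 1_d})·h(ℓ, r)` with `h` observable. -/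
theorem augmentation_space_ccmv [∀ j, Nonempty (X j)]
    (𝓡 : Finset (Pat d)) (h𝓡 : allOnes d ∈ 𝓡)
    (p : (∀ j, X j) → Pat d → ℝ)
    (hpmf : IsJointPMF 𝓡 p)
    (hpos : ∀ ℓ, 0 < p ℓ (allOnes d)) :
    ∀ w : (∀ j, X j) → Pat d → ℝ,
      (Observable 𝓡 w ∧ ∀ ℓ, ∑ r ∈ 𝓡, w ℓ r * p ℓ r = 0) ↔
      (∃ h : (∀ j, X j) → Pat d → ℝ, Observable 𝓡 h ∧
        ∀ ℓ, ∀ ρ ∈ 𝓡, w ℓ ρ =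
          ∑ r ∈ 𝓡.erase (allOnes d),
            ((if ρ = r then (1:ℝ) else 0)
              - (p ℓ r / p ℓ (allOnes d)) * (if ρ = allOnes d then (1:ℝ) else 0))
              * h ℓ r) :=
  augmentation_space_ccmv_general 𝓡 h𝓡 p hpos
end
end
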